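/- arXiv:2209.06200 — 8 statements merged into one kernel-verified Lean document; each statement's English description precedes it below -/
import Mathlib

section
/- The resolvent of the resolvent composition equals the composed resolvent: J_{L ▷ B} = L* ∘ J_B ∘ L, where L ▷ B = L* ▹ (B + Id) − Id, L* ▹ A = (L* ∘ A⁻¹ ∘ L)⁻¹ is the parallel composition, and J_B = (B + Id)⁻¹. -/
open scoped RealInnerProductSpace

noncomputable section

/-- Inverse of a set-valued operator. -/
def svInv {α β : Type*} (A : α → Set β) : β → Set α := fun y => {x | y ∈ A x}

/-- `A + Id`. -/
def plusId {E : Type*} [AddGroup E] (A : E → Set E) : E → Set E :=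
  fun x => (fun u => u + x) '' A x

/-- `A - Id`. -/
def minusId {E : Type*} [AddGroup E] (A : E → Set E) : E → Set E :=
  fun x => (fun u => u - x) '' A x

/-- Resolvent `J_A = (A + Id)⁻¹`. -/
def svResolvent {E : Type*} [AddGroup E] (A : E → Set E) : E → Set E :=
  svInv (plusId A)

/-- `L* ∘ A ∘ L` as a set-valued operator. -/
def svComp {H G : Type*} [NormedAddCommGroup H] [InnerProductSpace ℝ H] [CompleteSpace H]
    [NormedAddCommGroup G] [InnerProductSpace ℝ G] [CompleteSpace G]
    (L : H →L[ℝ] G) (A : G → Set G) : H → Set H :=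
  fun x => (ContinuousLinearMap.adjoint L) '' A (L x)

/-- Parallel composition `L* ▹ A = (L* ∘ A⁻¹ ∘ L)⁻¹`. -/
def parComp {H G : Type*} [NormedAddCommGroup H] [InnerProductSpace ℝ H] [CompleteSpace H]
    [NormedAddCommGroup G] [InnerProductSpace ℝ G] [CompleteSpace G]
    (L : H →L[ℝ] G) (A : G → Set G) : H → Set H :=
  svInv (svComp L (svInv A))

/-- Resolvent composition `L ▷ B = L* ▹ (B + Id) - Id`. -/
def rcomp {H G : Type*} [NormedAddCommGroup H] [InnerProductSpace ℝ H] [CompleteSpace H]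
    [NormedAddCommGroup G] [InnerProductSpace ℝ G] [CompleteSpace G]
    (L : H →L[ℝ] G) (B : G → Set G) : H → Set H :=
  minusId (parComp L (plusId B))

/-- Resolvent cocomposition `L ▶ B = (L ▷ B⁻¹)⁻¹`. -/
def ccomp {H G : Type*} [NormedAddCommGroup H] [InnerProductSpace ℝ H] [CompleteSpace H]
    [NormedAddCommGroup G] [InnerProductSpace ℝ G] [CompleteSpace G]
    (L : H →L[ℝ] G) (B : G → Set G) : H → Set H :=
  svInv (rcomp L (svInv B))

/-- Monotonicity of a set-valued operator. -/
def SVMonotone {E : Type*} [NormedAddCommGroup E] [InnerProductSpace ℝ E]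
    (A : E → Set E) : Prop :=
  ∀ x₁ u₁ x₂ u₂, u₁ ∈ A x₁ → u₂ ∈ A x₂ → 0 ≤ ⟪x₁ - x₂, u₁ - u₂⟫

/-- Maximal monotonicity of a set-valued operator. -/
def SVMaxMonotone {E : Type*} [NormedAddCommGroup E] [InnerProductSpace ℝ E]
    (A : E → Set E) : Prop :=
  SVMonotone A ∧ ∀ x u, (∀ y v, v ∈ A y → 0 ≤ ⟪x - y, u - v⟫) → u ∈ A x

variable {H G : Type*}
  [NormedAddCommGroup H] [InnerProductSpace ℝ H] [CompleteSpace H]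
  [NormedAddCommGroup G] [InnerProductSpace ℝ G] [CompleteSpace G]

theorem plusId_minusId {E : Type*} [AddGroup E] (A : E → Set E) : plusId (minusId A) = A := by
  funext x
  simp only [plusId, minusId, Set.image_image, sub_add_cancel, Set.image_id']

theorem svInv_svInv {α β : Type*} (A : α → Set β) : svInv (svInv A) = A :=
  rfl

theorem svResolvent_minusId {E : Type*} [AddGroup E] (A : E → Set E) :
    svResolvent (minusId A) = svInv A := by
  rw [svResolvent, plusId_minusId]

/-- The svResolvent of the svResolvent composition: `J_{L ▷ B} = L* ∘ J_B ∘ L`. -/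
theorem resolvent_rcomp (L : H →L[ℝ] G) (B : G → Set G) :
    svResolvent (rcomp L B) = svComp L (svResolvent B) := by
  rw [rcomp, svResolvent_minusId, parComp, svInv_svInv, svResolvent]
end
end

section
/- If ‖L‖ ≤ 1, D = G, and T : G → G is firmly nonexpansive, then L* ∘ T ∘ L is maximally monotone. -/
/-!
A firmly nonexpansive `T` is monotone and nonexpansive, so `F x = L* (T (L x))` is monotone
(`⟪x - y, L* v⟫ = ⟪L x - L y, v⟫`) and continuous. A continuous monotone single-valued
`F` is maximally monotone by Minty's trick: if `(x, u)` is monotonically related to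
the graph, testing against the points `x - t (F x - u)`, dividing by `t > 0` and letting
`t → 0⁺` gives `-‖F x - u‖² ≥ 0`.
-/

open scoped RealInnerProductSpace

noncomputable section

def FirmlyNonexpansive {E : Type*} [NormedAddCommGroup E] (T : E → E) : Prop :=
  ∀ x₁ x₂, ‖T x₁ - T x₂‖ ^ 2 + ‖(x₁ - T x₁) - (x₂ - T x₂)‖ ^ 2 ≤ ‖x₁ - x₂‖ ^ 2

namespace FirmlyNonexpansive

theorem lipschitzWith_one {E : Type*} [NormedAddCommGroup E] {T : E → E}
    (hT : FirmlyNonexpansive T) : LipschitzWith 1 T := by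
  refine LipschitzWith.of_dist_le_mul fun a b => ?_
  rw [NNReal.coe_one, one_mul, dist_eq_norm, dist_eq_norm]
  have h := hT a b
  exact le_of_sq_le_sq (by nlinarith [sq_nonneg ‖(a - T a) - (b - T b)‖]) (norm_nonneg _)

variable {E : Type*} [NormedAddCommGroup E] [InnerProductSpace ℝ E] {T : E → E}

theorem norm_sub_sq_le_inner (hT : FirmlyNonexpansive T) (a b : E) :
    ‖T a - T b‖ ^ 2 ≤ ⟪a - b, T a - T b⟫ := by
  have h := hT a b
  rw [show (a - T a) - (b - T b) = (a - b) - (T a - T b) by abel,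
    norm_sub_sq_real (a - b)] at h
  linarith

theorem inner_nonneg (hT : FirmlyNonexpansive T) (a b : E) : 0 ≤ ⟪a - b, T a - T b⟫ :=
  (sq_nonneg _).trans (hT.norm_sub_sq_le_inner a b)

end FirmlyNonexpansive

theorem svMaxMonotone_singleton_of_continuous {E : Type*} [NormedAddCommGroup E]
    [InnerProductSpace ℝ E] {F : E → E}
    (hmono : ∀ a b, 0 ≤ ⟪a - b, F a - F b⟫) (hcont : Continuous F) :
    SVMaxMonotone (fun x => {F x}) := by
  refine ⟨fun x₁ u₁ x₂ u₂ h₁ h₂ => ?_, fun x u h => ?_⟩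
  · rw [Set.mem_singleton_iff] at h₁ h₂
    exact h₁ ▸ h₂ ▸ hmono x₁ x₂
  set z := F x - u
  set g : ℝ → ℝ := fun t => ⟪z, u - F (x - t • z)⟫
  have hg_pos : ∀ t ∈ Set.Ioi (0 : ℝ), 0 ≤ g t := fun t ht => by
    have h' := h (x - t • z) _ rfl
    rw [sub_sub_cancel, real_inner_smul_left] at h'
    exact nonneg_of_mul_nonneg_right (by linarith) ht
  have hg_zero : 0 ≤ g 0 :=
    ge_of_tendsto (((by fun_prop : Continuous g).tendsto 0).mono_left nhdsWithin_le_nhds)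
      (eventually_nhdsWithin_of_forall hg_pos)
  have hg0 : g 0 = -‖z‖ ^ 2 := by
    rw [← real_inner_self_eq_norm_sq, ← inner_neg_right, neg_sub]
    simp only [g, zero_smul, sub_zero]
  have hz : z = 0 := norm_eq_zero.mp (by nlinarith [norm_nonneg z])
  exact (sub_eq_zero.mp hz).symm

variable {H G : Type*}
  [NormedAddCommGroup H] [InnerProductSpace ℝ H] [CompleteSpace H]
  [NormedAddCommGroup G] [InnerProductSpace ℝ G] [CompleteSpace G]

theorem inner_adjoint_comp_nonneg (L : H →L[ℝ] G) {T : G → G}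
    (hT : ∀ a b, 0 ≤ ⟪a - b, T a - T b⟫) (a b : H) :
    0 ≤ ⟪a - b, L.adjoint (T (L a)) - L.adjoint (T (L b))⟫ := by
  rw [← map_sub, ContinuousLinearMap.adjoint_inner_right, map_sub]
  exact hT _ _

theorem maxMonotone_comp_general (L : H →L[ℝ] G) (T : G → G)
    (hT : ∀ x₁ x₂, ‖T x₁ - T x₂‖ ^ 2 + ‖(x₁ - T x₁) - (x₂ - T x₂)‖ ^ 2 ≤ ‖x₁ - x₂‖ ^ 2) :
    SVMaxMonotone (fun x => {(ContinuousLinearMap.adjoint L) (T (L x))}) := by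
  have hT' : FirmlyNonexpansive T := hT
  exact svMaxMonotone_singleton_of_continuous
    (inner_adjoint_comp_nonneg L hT'.inner_nonneg)
    (L.adjoint.continuous.comp (hT'.lipschitzWith_one.continuous.comp L.continuous))

/-- If `‖L‖ ≤ 1` and `T : G → G` is firmly nonexpansive, then `L* ∘ T ∘ L` is
maximally monotone. -/
theorem maxMonotone_comp (L : H →L[ℝ] G) (hL : ‖L‖ ≤ 1) (T : G → G)
    (hT : ∀ x₁ x₂, ‖T x₁ - T x₂‖ ^ 2 + ‖(x₁ - T x₁) - (x₂ - T x₂)‖ ^ 2 ≤ ‖x₁ - x₂‖ ^ 2) :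
    SVMaxMonotone (fun x => {(ContinuousLinearMap.adjoint L) (T (L x))}) :=
  maxMonotone_comp_general L T hT
end
end

section
/- If L : H → G is a surjective isometry (i.e., L⁻¹ = L*) and B : G → 2^G, then the resolvent composition L ▷ B coincides with both L* ∘ B ∘ L and the parallel composition L* ▹ B = (L* ∘ B⁻¹ ∘ L)⁻¹. -/
/-!
A surjective isometry `L` is a linear isometry equivalence with `L* = L⁻¹`, so both `L* ∘ A ∘ L`
and `L* ▹ A = (L* ∘ A⁻¹ ∘ L)⁻¹` are the pullback `x ↦ L⁻¹ (A (L x))`. This pullback commutes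
with adding `Id`, and subtracting `Id` again gives back `L* ∘ B ∘ L`.
-/

open scoped RealInnerProductSpace

noncomputable section

variable {H G : Type*}
  [NormedAddCommGroup H] [InnerProductSpace ℝ H] [CompleteSpace H]
  [NormedAddCommGroup G] [InnerProductSpace ℝ G] [CompleteSpace G]

theorem minusId_plusId {E : Type*} [AddGroup E] (A : E → Set E) : minusId (plusId A) = A := by
  funext x
  simp only [minusId, plusId, Set.image_image, add_sub_cancel_right, Set.image_id']

namespace ContinuousLinearMap

theorem adjoint_apply_apply_of_norm_map {L : H →L[ℝ] G} (hL : ∀ x, ‖L x‖ = ‖x‖) (x : H) :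
    adjoint L (L x) = x :=
  DFunLike.congr_fun ((norm_map_iff_adjoint_comp_self L).mp hL) x

theorem svComp_plusId {L : H →L[ℝ] G} (hL : ∀ x, ‖L x‖ = ‖x‖) (B : G → Set G) :
    svComp L (plusId B) = plusId (svComp L B) := by
  funext x
  simp only [svComp, plusId, Set.image_image, map_add, adjoint_apply_apply_of_norm_map hL]

end ContinuousLinearMap

namespace LinearIsometryEquiv

theorem svComp_apply (e : H ≃ₗᵢ[ℝ] G) (A : G → Set G) (x : H) :
    svComp (e : H →L[ℝ] G) A x = e ⁻¹' A (e x) := by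
  rw [svComp, adjoint_eq_symm]
  exact e.symm.image_eq_preimage_symm _

theorem parComp_eq_svComp (e : H ≃ₗᵢ[ℝ] G) (A : G → Set G) :
    parComp (e : H →L[ℝ] G) A = svComp (e : H →L[ℝ] G) A := by
  funext x
  ext u
  simp [parComp, svInv, svComp_apply]

theorem rcomp_eq_svComp (e : H ≃ₗᵢ[ℝ] G) (B : G → Set G) :
    rcomp (e : H →L[ℝ] G) B = svComp (e : H →L[ℝ] G) B := by
  rw [rcomp, parComp_eq_svComp, ContinuousLinearMap.svComp_plusId e.norm_map, minusId_plusId]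

end LinearIsometryEquiv

/-- For a surjective isometry `L`, `L ▷ B = L* ∘ B ∘ L = L* ▹ B`. -/
theorem rcomp_of_surjective_isometry (L : H →L[ℝ] G)
    (hsurj : Function.Surjective L) (hiso : ∀ x, ‖L x‖ = ‖x‖) (B : G → Set G) :
    rcomp L B = svComp L B ∧ rcomp L B = parComp L B := by
  let e := LinearIsometryEquiv.ofSurjective ⟨L.toLinearMap, hiso⟩ hsurj
  have he : (e : H →L[ℝ] G) = L := rfl
  rw [← he]
  exact ⟨e.rcomp_eq_svComp B, (e.rcomp_eq_svComp B).trans (e.parComp_eq_svComp B).symm⟩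
end
end

section
/- The resolvent of the resolvent cocomposition satisfies J_{L ▶ B} = Id_H − L* ∘ L + L* ∘ J_B ∘ L. -/
/-!
Two resolvent identities suffice: `J_{L ▷ B} = L* ∘ J_B ∘ L`, which is immediate from the
definitions of `L ▷ B` and of the parallel composition, and `J_{A⁻¹} = Id − J_A`. Since
`L ▶ B = (L ▷ B⁻¹)⁻¹`, they give `J_{L ▶ B} = Id − L* ∘ J_{B⁻¹} ∘ L = Id − L* ∘ (Id − J_B) ∘ L`.
-/

open scoped RealInnerProductSpace

noncomputable section

variable {H G : Type*}
  [NormedAddCommGroup H] [InnerProductSpace ℝ H] [CompleteSpace H]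
  [NormedAddCommGroup G] [InnerProductSpace ℝ G] [CompleteSpace G]

section SetValued

variable {E : Type*} [AddCommGroup E]

theorem mem_plusId {A : E → Set E} {x y : E} : y ∈ plusId A x ↔ y - x ∈ A x := by
  simp only [plusId, Set.mem_image, ← eq_sub_iff_add_eq, exists_eq_right]

theorem mem_minusId {A : E → Set E} {x y : E} : y ∈ minusId A x ↔ y + x ∈ A x := by
  simp only [minusId, Set.mem_image, sub_eq_iff_eq_add, exists_eq_right]

theorem mem_svResolvent {A : E → Set E} {x p : E} : p ∈ svResolvent A x ↔ x - p ∈ A p :=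
  mem_plusId

theorem svResolvent_svInv (A : E → Set E) (x : E) :
    svResolvent (svInv A) x = (x - ·) '' svResolvent A x := by
  ext p
  constructor
  · intro hp
    refine ⟨x - p, mem_svResolvent.2 ?_, sub_sub_cancel x p⟩
    rw [sub_sub_cancel]
    exact mem_svResolvent.1 hp
  · rintro ⟨q, hq, rfl⟩
    refine mem_svResolvent.2 ?_
    rw [sub_sub_cancel]
    exact mem_svResolvent.1 hq

end SetValued

theorem svResolvent_rcomp (L : H →L[ℝ] G) (B : G → Set G) (x : H) :
    svResolvent (rcomp L B) x = ContinuousLinearMap.adjoint L '' svResolvent B (L x) := by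
  ext u
  rw [mem_svResolvent, rcomp, mem_minusId, sub_add_cancel]
  rfl

/-- `J_{L ▶ B} = Id − L* ∘ L + L* ∘ J_B ∘ L`. -/
theorem resolvent_ccomp (L : H →L[ℝ] G) (B : G → Set G) :
    svResolvent (ccomp L B) = fun x =>
      (fun p => x - (ContinuousLinearMap.adjoint L) (L x) +
        (ContinuousLinearMap.adjoint L) p) '' svResolvent B (L x) := by
  funext x
  rw [ccomp, svResolvent_svInv, svResolvent_rcomp, svResolvent_svInv, Set.image_image,
    Set.image_image]
  refine Set.image_congr fun p _ => ?_
  rw [map_sub]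
  abel
end
end

section
/- The zero set of the resolvent composition equals the fixed point set of the composed resolvent: zer(L ▷ B) = Fix(L* ∘ J_B ∘ L). -/
open scoped RealInnerProductSpace

noncomputable section

variable {H G : Type*}
  [NormedAddCommGroup H] [InnerProductSpace ℝ H] [CompleteSpace H]
  [NormedAddCommGroup G] [InnerProductSpace ℝ G] [CompleteSpace G]

theorem mem_svInv {α β : Type*} {A : α → Set β} {x : α} {y : β} :
    x ∈ svInv A y ↔ y ∈ A x :=
  Iff.rfl

theorem zero_mem_minusId_iff {E : Type*} [AddGroup E] {A : E → Set E} {x : E} :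
    0 ∈ minusId A x ↔ x ∈ A x := by
  simp [minusId, sub_eq_zero]

theorem parComp_plusId (L : H →L[ℝ] G) (B : G → Set G) :
    parComp L (plusId B) = svInv (svComp L (svResolvent B)) :=
  rfl

/-- `zer (L ▷ B) = Fix (L* ∘ J_B ∘ L)`. -/
theorem zer_rcomp (L : H →L[ℝ] G) (B : G → Set G) :
    {x : H | (0 : H) ∈ rcomp L B x} = {x : H | x ∈ svComp L (svResolvent B) x} := by
  ext x
  rw [Set.mem_ofPred_eq, rcomp, zero_mem_minusId_iff, parComp_plusId, mem_svInv,
    Set.mem_ofPred_eq]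
end
end

section
/- If ‖L‖ ≤ 1 and B : G → 2^G is monotone, then the resolvent composition L ▷ B is monotone. -/
open scoped RealInnerProductSpace

noncomputable section

variable {H G : Type*}
  [NormedAddCommGroup H] [InnerProductSpace ℝ H] [CompleteSpace H]
  [NormedAddCommGroup G] [InnerProductSpace ℝ G] [CompleteSpace G]

/-! Writing `v` for a point of `(B + Id)⁻¹ (L p)`, the graph of `L ▷ B` consists of the pairs
`(L* v, p - L* v)` with `L p - v ∈ B v`. For two such pairs, with `y = v₁ - v₂` and
`q = p₁ - p₂`, the required inner product is `⟪y, L q⟫ - ‖L* y‖²`; since `‖L*‖ = ‖L‖ ≤ 1` it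
dominates `⟪y, L q⟫ - ‖y‖² = ⟪y, L q - y⟫`, which is nonnegative by monotonicity of `B`. -/

open scoped InnerProduct

theorem mem_rcomp_iff (L : H →L[ℝ] G) (B : G → Set G) (x u : H) :
    u ∈ rcomp L B x ↔ ∃ v p, L p - v ∈ B v ∧ (L†) v = x ∧ p - x = u := by
  constructor
  · rintro ⟨p, ⟨v, ⟨b, hb, hbv⟩, hvx⟩, rfl⟩
    exact ⟨v, p, by rwa [← hbv, add_sub_cancel_right], hvx, rfl⟩
  · rintro ⟨v, p, hv, hvx, rfl⟩
    exact ⟨p, ⟨v, ⟨L p - v, hv, sub_add_cancel _ _⟩, hvx⟩, rfl⟩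

theorem norm_adjoint_apply_le (L : H →L[ℝ] G) (hL : ‖L‖ ≤ 1) (y : G) : ‖(L†) y‖ ≤ ‖y‖ :=
  (L†).le_of_opNorm_le_of_le ((LinearIsometryEquiv.norm_map _ L).trans_le hL) le_rfl
    |>.trans_eq (one_mul _)

theorem inner_sub_le_inner_adjoint_sub (L : H →L[ℝ] G) (hL : ‖L‖ ≤ 1) (y : G) (q : H) :
    ⟪y, L q - y⟫ ≤ ⟪(L†) y, q - (L†) y⟫ := by
  have hsq : ‖(L†) y‖ ^ 2 ≤ ‖y‖ ^ 2 :=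
    pow_le_pow_left₀ (norm_nonneg _) (norm_adjoint_apply_le L hL y) 2
  rw [inner_sub_right, inner_sub_right, ContinuousLinearMap.adjoint_inner_left,
    real_inner_self_eq_norm_sq, real_inner_self_eq_norm_sq]
  linarith

/-- If `‖L‖ ≤ 1` and `B` is monotone, then `L ▷ B` is monotone. -/
theorem rcomp_monotone (L : H →L[ℝ] G) (hL : ‖L‖ ≤ 1) (B : G → Set G)
    (hB : SVMonotone B) : SVMonotone (rcomp L B) := by
  intro x₁ u₁ x₂ u₂ h₁ h₂
  obtain ⟨v₁, p₁, hv₁, rfl, rfl⟩ := (mem_rcomp_iff L B x₁ u₁).1 h₁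
  obtain ⟨v₂, p₂, hv₂, rfl, rfl⟩ := (mem_rcomp_iff L B x₂ u₂).1 h₂
  calc (0 : ℝ) ≤ ⟪v₁ - v₂, L (p₁ - p₂) - (v₁ - v₂)⟫ := by
        simpa only [map_sub, sub_sub_sub_comm] using hB v₁ _ v₂ _ hv₁ hv₂
    _ ≤ ⟪(L†) (v₁ - v₂), p₁ - p₂ - (L†) (v₁ - v₂)⟫ := inner_sub_le_inner_adjoint_sub L hL _ _
    _ = ⟪(L†) v₁ - (L†) v₂, p₁ - (L†) v₁ - (p₂ - (L†) v₂)⟫ := by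
        rw [map_sub, sub_sub_sub_comm p₁]
end
end

section
/- If 0 < ‖L‖ < √(β+1), D ⊆ G nonempty, and B : D → G is β-cocoercive, then the resolvent cocomposition L ▶ B is α-cocoercive with α = (β+1)‖L‖⁻² − 1. -/
/-!
Unfolding the definitions, `u ∈ (L ▶ B) x` means `u = L* g` for some `g ∈ B a` with
`a + g = L (x + u)`. Pairing with `u` gives `⟪x, u⟫ = ⟪L x, g⟫ = ⟪a, g⟫ + ‖g‖² - ‖u‖²`, and the same
holds for differences of two such points. Cocoercivity of `B` bounds `⟪a, g⟫ + ‖g‖²` below by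
`(β + 1) ‖g‖²`, and `‖u‖ ≤ ‖L‖ ‖g‖` turns this into `(β + 1) ‖L‖⁻² ‖u‖²`.
-/

open scoped RealInnerProductSpace

noncomputable section

variable {H G : Type*}
  [NormedAddCommGroup H] [InnerProductSpace ℝ H] [CompleteSpace H]
  [NormedAddCommGroup G] [InnerProductSpace ℝ G] [CompleteSpace G]

open scoped InnerProduct

def SVCocoercive {E : Type*} [NormedAddCommGroup E] [InnerProductSpace ℝ E]
    (β : ℝ) (A : E → Set E) : Prop :=
  ∀ x₁ u₁ x₂ u₂, u₁ ∈ A x₁ → u₂ ∈ A x₂ → β * ‖u₁ - u₂‖ ^ 2 ≤ ⟪x₁ - x₂, u₁ - u₂⟫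

theorem svCocoercive_graph {E : Type*} [NormedAddCommGroup E] [InnerProductSpace ℝ E]
    {β : ℝ} {D : Set E} {B : E → E}
    (hB : ∀ y₁ ∈ D, ∀ y₂ ∈ D, β * ‖B y₁ - B y₂‖ ^ 2 ≤ ⟪y₁ - y₂, B y₁ - B y₂⟫) :
    SVCocoercive β (fun y => {v | y ∈ D ∧ v = B y}) := by
  rintro y₁ _ y₂ _ ⟨hy₁, rfl⟩ ⟨hy₂, rfl⟩
  exact hB y₁ hy₁ y₂ hy₂

theorem mem_ccomp_iff {L : H →L[ℝ] G} {B : G → Set G} {x u : H} :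
    u ∈ ccomp L B x ↔ ∃ a g, g ∈ B a ∧ (L†) g = u ∧ a + g = L (x + u) := by
  simp only [ccomp, rcomp, minusId, parComp, svComp, svInv, plusId, Set.mem_image,
    Set.mem_ofPred_eq]
  constructor
  · rintro ⟨w, ⟨g, ⟨a, hga, hw⟩, hu⟩, rfl⟩
    exact ⟨a, g, hga, hu, by rw [sub_add_cancel, hw]⟩
  · rintro ⟨a, g, hga, hu, hw⟩
    exact ⟨x + u, ⟨g, ⟨a, hga, hw⟩, hu⟩, add_sub_cancel_right x u⟩

theorem inner_eq_of_adjoint_apply_eq {L : H →L[ℝ] G} {x u : H} {a g : G}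
    (hu : (L†) g = u) (hg : a + g = L (x + u)) :
    ⟪x, u⟫ = ⟪a, g⟫ + ‖g‖ ^ 2 - ‖u‖ ^ 2 := by
  have hLx : L x = a + g - L u := by rw [hg, map_add, add_sub_cancel_right]
  have hLu : ⟪L u, g⟫ = ‖u‖ ^ 2 := by
    rw [← L.adjoint_inner_right, hu, real_inner_self_eq_norm_sq]
  have hxu : ⟪x, u⟫ = ⟪L x, g⟫ := by rw [← hu, L.adjoint_inner_right]
  rw [hxu, hLx, inner_sub_left, inner_add_left, hLu, real_inner_self_eq_norm_sq]

theorem norm_adjoint_apply_sq_le (L : H →L[ℝ] G) (g : G) :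
    ‖(L†) g‖ ^ 2 ≤ ‖g‖ ^ 2 * ‖L‖ ^ 2 := by
  rw [← mul_pow, mul_comm, ← LinearIsometryEquiv.norm_map ContinuousLinearMap.adjoint L]
  exact pow_le_pow_left₀ (norm_nonneg _) ((L†).le_opNorm g) 2

theorem SVCocoercive.ccomp {β : ℝ} {B : G → Set G} (hB : SVCocoercive β B) (hβ : 0 ≤ β + 1)
    (L : H →L[ℝ] G) : SVCocoercive ((β + 1) / ‖L‖ ^ 2 - 1) (ccomp L B) := by
  intro x₁ u₁ x₂ u₂ h₁ h₂
  obtain ⟨a₁, g₁, hg₁, hu₁, hw₁⟩ := mem_ccomp_iff.1 h₁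
  obtain ⟨a₂, g₂, hg₂, hu₂, hw₂⟩ := mem_ccomp_iff.1 h₂
  have hinner : ⟪x₁ - x₂, u₁ - u₂⟫ = ⟪a₁ - a₂, g₁ - g₂⟫ + ‖g₁ - g₂‖ ^ 2 - ‖u₁ - u₂‖ ^ 2 := by
    refine inner_eq_of_adjoint_apply_eq (L := L) (by rw [map_sub, hu₁, hu₂]) ?_
    rw [sub_add_sub_comm, hw₁, hw₂, ← map_sub, add_sub_add_comm]
  have hnorm : (β + 1) / ‖L‖ ^ 2 * ‖u₁ - u₂‖ ^ 2 ≤ (β + 1) * ‖g₁ - g₂‖ ^ 2 := by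
    rw [div_mul_eq_mul_div, mul_div_assoc]
    gcongr
    refine div_le_of_le_mul₀ (by positivity) (by positivity) ?_
    rw [← hu₁, ← hu₂, ← map_sub]
    exact norm_adjoint_apply_sq_le L (g₁ - g₂)
  linarith [hB _ _ _ _ hg₁ hg₂]

theorem ccomp_cocoercive_general (L : H →L[ℝ] G) (β : ℝ) (hβ : 0 < β)
    (D : Set G) (B : G → G)
    (hB : ∀ y₁ ∈ D, ∀ y₂ ∈ D, β * ‖B y₁ - B y₂‖ ^ 2 ≤ ⟪y₁ - y₂, B y₁ - B y₂⟫) :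
    ∀ x₁ u₁ x₂ u₂,
      u₁ ∈ ccomp L (fun y => {v | y ∈ D ∧ v = B y}) x₁ →
      u₂ ∈ ccomp L (fun y => {v | y ∈ D ∧ v = B y}) x₂ →
      ((β + 1) / ‖L‖ ^ 2 - 1) * ‖u₁ - u₂‖ ^ 2 ≤ ⟪x₁ - x₂, u₁ - u₂⟫ :=
  (svCocoercive_graph hB).ccomp (by linarith) L

/-- If `B : D → G` is `β`-cocoercive and `0 < ‖L‖ < √(β+1)`, then `L ▶ B` is
`α`-cocoercive with `α = (β+1)‖L‖⁻² − 1`. -/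
theorem ccomp_cocoercive (L : H →L[ℝ] G) (β : ℝ) (hβ : 0 < β)
    (hL0 : 0 < ‖L‖) (hLb : ‖L‖ < Real.sqrt (β + 1))
    (D : Set G) (hD : D.Nonempty) (B : G → G)
    (hB : ∀ y₁ ∈ D, ∀ y₂ ∈ D, β * ‖B y₁ - B y₂‖ ^ 2 ≤ ⟪y₁ - y₂, B y₁ - B y₂⟫) :
    ∀ x₁ u₁ x₂ u₂,
      u₁ ∈ ccomp L (fun y => {v | y ∈ D ∧ v = B y}) x₁ →
      u₂ ∈ ccomp L (fun y => {v | y ∈ D ∧ v = B y}) x₂ →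
      ((β + 1) / ‖L‖ ^ 2 - 1) * ‖u₁ - u₂‖ ^ 2 ≤ ⟪x₁ - x₂, u₁ - u₂⟫ :=
  ccomp_cocoercive_general L β hβ D B hB
end
end

section
/- For L : H → G an isometry and g : G → ]−∞,+∞] proper admitting a continuous affine minorant, the proximal composition L ▷ g satisfies (g* ∘ L)* ≤ L ▷ g ≤ g ∘ L. -/
/-
Write `φ = (g* □ Q) ∘ L`. Because `L` preserves norms, `φ ≤ (g* ∘ L) □ Q`, and Fenchel–Young for
`Q` gives `(g + Q)* ≤ g* □ Q`. Conjugation reverses both comparisons, and conjugating an infimal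
convolution with `Q` adds `Q`:
`(g* ∘ L)* + Q ≤ ((g* ∘ L) □ Q)* ≤ φ* ≤ ((g + Q)* ∘ L)* ≤ (g + Q) ∘ L = g ∘ L + Q`,
the last step because `⟪L x, L h⟫ = ⟪x, h⟫`. Subtracting `Q` gives both bounds.
-/

open scoped RealInnerProductSpace

noncomputable section

/-- Fenchel conjugate with values in `EReal`. -/
def eConj {E : Type*} [NormedAddCommGroup E] [InnerProductSpace ℝ E] (f : E → EReal) :
    E → EReal :=
  fun u => ⨆ x, ((⟪x, u⟫ : ℝ) : EReal) - f x

/-- Infimal convolution. -/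
def eInfConv {E : Type*} [AddGroup E] (f g : E → EReal) : E → EReal :=
  fun x => ⨅ z, f z + g (x - z)

/-- Canonical quadratic form `Q = ‖·‖²/2`. -/
def eQ {E : Type*} [Norm E] : E → EReal := fun x => ((‖x‖ ^ 2 / 2 : ℝ) : EReal)

/-- Proximal composition `L ▷ g = ((g* □ Q_G) ∘ L)* - Q_H`. -/
def pcomp {H G : Type*} [NormedAddCommGroup H] [InnerProductSpace ℝ H] [CompleteSpace H]
    [NormedAddCommGroup G] [InnerProductSpace ℝ G] [CompleteSpace G]
    (L : H →L[ℝ] G) (g : G → EReal) : H → EReal :=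
  fun x => eConj (fun h => eInfConv (eConj g) eQ (L h)) x - eQ x

/-- Proximal cocomposition `L ▶ g = (L ▷ g*)*`. -/
def pccomp {H G : Type*} [NormedAddCommGroup H] [InnerProductSpace ℝ H] [CompleteSpace H]
    [NormedAddCommGroup G] [InnerProductSpace ℝ G] [CompleteSpace G]
    (L : H →L[ℝ] G) (g : G → EReal) : H → EReal :=
  eConj (pcomp L (eConj g))

/-- Properness of an `EReal`-valued function. -/
def EProper {E : Type*} (f : E → EReal) : Prop := (∀ x, f x ≠ ⊥) ∧ ∃ x, f x ≠ ⊤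

/-- Convexity via the epigraph. -/
def EConvex {E : Type*} [AddCommGroup E] [Module ℝ E] (f : E → EReal) : Prop :=
  Convex ℝ {p : E × ℝ | f p.1 ≤ (p.2 : EReal)}

/-- Convex subdifferential. -/
def esubdiff {E : Type*} [NormedAddCommGroup E] [InnerProductSpace ℝ E] (f : E → EReal) :
    E → Set E :=
  fun x => {u | ∀ z, f x + ((⟪z - x, u⟫ : ℝ) : EReal) ≤ f z}

/-- `p` is the proximal point of `f` at `x`. -/
def IsProxPt {E : Type*} [NormedAddCommGroup E] [InnerProductSpace ℝ E]
    (f : E → EReal) (x p : E) : Prop :=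
  ∀ z, f p + ((‖x - p‖ ^ 2 / 2 : ℝ) : EReal) ≤ f z + ((‖x - z‖ ^ 2 / 2 : ℝ) : EReal)

variable {H G : Type*}
  [NormedAddCommGroup H] [InnerProductSpace ℝ H] [CompleteSpace H]
  [NormedAddCommGroup G] [InnerProductSpace ℝ G] [CompleteSpace G]

/- `EReal` is not a `SubtractionCommMonoid` (`⊥ + ⊤ = ⊥`); the rearrangements below hold because
the constants are real. -/
namespace EReal

theorem coe_sub_add_coe (a c : ℝ) (e : EReal) :
    (a : EReal) - e + c = ((a + c : ℝ) : EReal) - e := by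
  induction e using EReal.rec with
  | bot => simp
  | top => simp
  | coe e => norm_cast; ring

theorem coe_sub_add_coe_eq_sub_sub (a c : ℝ) (e : EReal) :
    (a : EReal) - (e + c) = ((a - c : ℝ) : EReal) - e := by
  induction e using EReal.rec with
  | bot => simp only [bot_add, coe_sub_bot]
  | top => simp
  | coe e => norm_cast; ring

theorem coe_sub_sub_cancel (a : ℝ) (e : EReal) : (a : EReal) - (a - e) = e := by
  induction e using EReal.rec with
  | bot => simp only [coe_sub_bot, sub_top]
  | top => simp only [sub_top, coe_sub_bot]
  | coe e => norm_cast; ring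

end EReal

section Conjugate

variable {E F : Type*} [NormedAddCommGroup E] [InnerProductSpace ℝ E]
  [NormedAddCommGroup F] [InnerProductSpace ℝ F]

theorem coe_inner_sub_le_eConj (f : E → EReal) (x u : E) :
    ((⟪x, u⟫ : ℝ) : EReal) - f x ≤ eConj f u :=
  le_iSup (fun x => ((⟪x, u⟫ : ℝ) : EReal) - f x) x

theorem eConj_antitone : Antitone (eConj : (E → EReal) → E → EReal) :=
  fun _ _ hf _ => iSup_mono fun x => EReal.sub_le_sub le_rfl (hf x)

theorem eQ_map (L : E →ₗᵢ[ℝ] F) (x : E) : eQ (L x) = eQ x := by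
  simp only [eQ, LinearIsometry.norm_map]

theorem eConj_add_eQ_le_eConj_eInfConv (f : E → EReal) (u : E) :
    eConj f u + eQ u ≤ eConj (eInfConv f eQ) u := by
  refine EReal.add_le_of_le_sub (iSup_le fun z => ?_)
  refine (EReal.le_sub_iff_add_le (.inl (EReal.coe_ne_bot _)) (.inl (EReal.coe_ne_top _))).2 ?_
  calc ((⟪z, u⟫ : ℝ) : EReal) - f z + eQ u
      = ((⟪z, u⟫ + ‖u‖ ^ 2 / 2 : ℝ) : EReal) - f z := EReal.coe_sub_add_coe _ _ _
    _ = ((⟪z + u, u⟫ - ‖u‖ ^ 2 / 2 : ℝ) : EReal) - f z := by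
        rw [inner_add_left, real_inner_self_eq_norm_sq]
        ring_nf
    _ = ((⟪z + u, u⟫ : ℝ) : EReal) - (f z + eQ u) :=
        (EReal.coe_sub_add_coe_eq_sub_sub _ _ _).symm
    _ ≤ ((⟪z + u, u⟫ : ℝ) : EReal) - eInfConv f eQ (z + u) :=
        EReal.sub_le_sub le_rfl (iInf_le_of_le z (by rw [add_sub_cancel_left]))
    _ ≤ eConj (eInfConv f eQ) u := coe_inner_sub_le_eConj _ _ _

theorem eConj_add_eQ_le_eInfConv (f : E → EReal) (y : E) :
    eConj (f + eQ) y ≤ eInfConv (eConj f) eQ y := by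
  refine le_iInf fun w => iSup_le fun z => ?_
  have hquad : ⟪z, y⟫ - ‖z‖ ^ 2 / 2 ≤ ⟪z, w⟫ + ‖y - w‖ ^ 2 / 2 := by
    have := real_inner_le_norm z (y - w)
    rw [inner_sub_right] at this
    nlinarith [sq_nonneg (‖z‖ - ‖y - w‖)]
  calc ((⟪z, y⟫ : ℝ) : EReal) - (f + eQ : E → EReal) z
      = ((⟪z, y⟫ - ‖z‖ ^ 2 / 2 : ℝ) : EReal) - f z := EReal.coe_sub_add_coe_eq_sub_sub _ _ _
    _ ≤ ((⟪z, w⟫ + ‖y - w‖ ^ 2 / 2 : ℝ) : EReal) - f z :=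
        EReal.sub_le_sub (EReal.coe_le_coe_iff.2 hquad) le_rfl
    _ = (((⟪z, w⟫ : ℝ) : EReal) - f z) + eQ (y - w) := (EReal.coe_sub_add_coe _ _ _).symm
    _ ≤ eConj f w + eQ (y - w) := add_le_add_left (coe_inner_sub_le_eConj f z w) _

theorem eConj_eConj_comp_le (L : E →ₗᵢ[ℝ] F) (f : F → EReal) (x : E) :
    eConj (fun h => eConj f (L h)) x ≤ f (L x) := by
  refine iSup_le fun h => ?_
  calc ((⟪h, x⟫ : ℝ) : EReal) - eConj f (L h)
      ≤ ((⟪h, x⟫ : ℝ) : EReal) - (((⟪L x, L h⟫ : ℝ) : EReal) - f (L x)) :=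
        EReal.sub_le_sub le_rfl (coe_inner_sub_le_eConj f (L x) (L h))
    _ = f (L x) := by rw [LinearIsometry.inner_map_map, real_inner_comm, EReal.coe_sub_sub_cancel]

theorem eInfConv_eQ_map_le (L : E →ₗᵢ[ℝ] F) (f : F → EReal) (h : E) :
    eInfConv f eQ (L h) ≤ eInfConv (fun h => f (L h)) eQ h :=
  le_iInf fun h' => iInf_le_of_le (L h') (by rw [← map_sub, eQ_map])

end Conjugate

theorem pcomp_bounds_general (L : H →L[ℝ] G) (hiso : ∀ x, ‖L x‖ = ‖x‖)
    (g : G → EReal) :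
    ∀ x, eConj (fun h => eConj g (L h)) x ≤ pcomp L g x ∧ pcomp L g x ≤ g (L x) := by
  let Li : H →ₗᵢ[ℝ] G := ⟨L, hiso⟩
  intro x
  constructor
  · refine (EReal.le_sub_iff_add_le (.inl (EReal.coe_ne_bot _)) (.inl (EReal.coe_ne_top _))).2 ?_
    calc eConj (fun h => eConj g (Li h)) x + eQ x
        ≤ eConj (eInfConv (fun h => eConj g (Li h)) eQ) x := eConj_add_eQ_le_eConj_eInfConv _ x
      _ ≤ eConj (fun h => eInfConv (eConj g) eQ (Li h)) x :=
          eConj_antitone (fun h => eInfConv_eQ_map_le Li (eConj g) h) x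
  · calc pcomp L g x = eConj (fun h => eInfConv (eConj g) eQ (Li h)) x - eQ x := rfl
      _ ≤ eConj (fun h => eConj (g + eQ) (Li h)) x - eQ x :=
          EReal.sub_le_sub (eConj_antitone (fun h => eConj_add_eQ_le_eInfConv g (Li h)) x) le_rfl
      _ ≤ (g + eQ : G → EReal) (Li x) - eQ x :=
          EReal.sub_le_sub (eConj_eConj_comp_le Li (g + eQ) x) le_rfl
      _ = g (L x) := by rw [Pi.add_apply, eQ_map]; exact EReal.add_sub_cancel_right

/-- For an isometry `L` and proper `g` with a continuous affine minorant,
`(g* ∘ L)* ≤ L ▷ g ≤ g ∘ L`. -/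
theorem pcomp_bounds (L : H →L[ℝ] G) (hiso : ∀ x, ‖L x‖ = ‖x‖)
    (g : G → EReal) (hp : EProper g)
    (hmin : ∃ (u : G) (c : ℝ), ∀ y, ((⟪y, u⟫ + c : ℝ) : EReal) ≤ g y) :
    ∀ x, eConj (fun h => eConj g (L h)) x ≤ pcomp L g x ∧ pcomp L g x ≤ g (L x) :=
  pcomp_bounds_general L hiso g
end
end
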